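/- For every real β ≥ 1, the limit lim_{P→0⁺} P³ · C₃,₀(P)/(σ₀²(P))³ exists and equals 2β; i.e., at low SNR the leading-order skewness ratio κ₃/σ⁶ behaves like 2β/(n·P³). -/

import Mathlib

open Filter Topology

/-- `a = (√β − 1)²`. -/
noncomputable def a (β : ℝ) : ℝ := (Real.sqrt β - 1) ^ 2

/-- `b = (√β + 1)²`. -/
noncomputable def b (β : ℝ) : ℝ := (Real.sqrt β + 1) ^ 2

/-- The leading-order asymptotic variance `σ₀²(P)`. -/
noncomputable def sigma0sq (β P : ℝ) : ℝ :=
  2 * Real.log ((((β + a β * P) / (β + b β * P)) ^ ((1 : ℝ) / 4) +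
    ((β + b β * P) / (β + a β * P)) ^ ((1 : ℝ) / 4)) / 2)

/-- The leading-order third cumulant `C₃,₀(P)`. -/
noncomputable def C₃₀ (β P : ℝ) : ℝ :=
  (β + 1) / (2 * β) - 3 * β * P / (β ^ 2 + 2 * β * (β + 1) * P + (β - 1) ^ 2 * P ^ 2) -
    ((β - 1) ^ 2 * ((β ^ 2 + 1) * P ^ 3 + 3 * β * (β + 1) * P ^ 2) +
        3 * β ^ 2 * (β ^ 2 + 1) * P + β ^ 3 * (β + 1)) /
      (2 * β * (β ^ 2 + 2 * β * (β + 1) * P + (β - 1) ^ 2 * P ^ 2) ^ ((3 : ℝ) / 2))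

lemma sinh_slope : Tendsto (fun v : ℝ => Real.sinh v / v) (𝓝[≠] (0:ℝ)) (𝓝 1) := by
  have h := Real.hasDerivAt_sinh 0
  rw [hasDerivAt_iff_tendsto_slope] at h
  simp only [slope_fun_def, Real.sinh_zero, Real.cosh_zero, sub_zero, vsub_eq_sub] at h
  exact h.congr (fun v => by rw [smul_eq_mul, div_eq_mul_inv, mul_comm])

lemma log1p_slope : Tendsto (fun t : ℝ => Real.log (1 + t) / t) (𝓝[≠] (0:ℝ)) (𝓝 1) := by
  have h1 : HasDerivAt (fun t : ℝ => 1 + t) 1 0 := by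
    simpa using (hasDerivAt_id (0:ℝ)).const_add 1
  have h : HasDerivAt (fun t : ℝ => Real.log (1 + t)) 1 0 := by
    have := (Real.hasDerivAt_log (by norm_num : (1:ℝ) + 0 ≠ 0)).comp 0 h1
    simpa [Function.comp_def] using this
  rw [hasDerivAt_iff_tendsto_slope] at h
  simp only [slope_fun_def, add_zero, Real.log_one, sub_zero, vsub_eq_sub] at h
  exact h.congr (fun t => by rw [smul_eq_mul, div_eq_mul_inv, mul_comm])

lemma coshratio : Tendsto (fun v : ℝ => (Real.cosh v - 1) / v ^ 2) (𝓝[≠] (0:ℝ)) (𝓝 (1/2)) := by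
  have h2 : Tendsto (fun v : ℝ => v / 2) (𝓝[≠] (0:ℝ)) (𝓝[≠] (0:ℝ)) := by
    apply tendsto_nhdsWithin_of_tendsto_nhds_of_eventually_within
    · simpa using ((continuous_id.div_const (2:ℝ)).tendsto 0).mono_left nhdsWithin_le_nhds
    · filter_upwards [self_mem_nhdsWithin] with v hv
      exact div_ne_zero hv two_ne_zero
  have h3 : Tendsto (fun v : ℝ => (1/2) * (Real.sinh (v/2) / (v/2)) ^ 2)
      (𝓝[≠] (0:ℝ)) (𝓝 (1/2)) := by
    have := ((sinh_slope.comp h2).pow 2).const_mul (1/2 : ℝ)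
    simpa using this
  refine h3.congr' ?_
  filter_upwards [self_mem_nhdsWithin] with v hv
  have hch : Real.cosh v - 1 = 2 * Real.sinh (v/2) ^ 2 := by
    have h4 : Real.cosh v = Real.cosh (2 * (v/2)) := by ring_nf
    rw [h4, Real.cosh_two_mul, Real.cosh_sq]; ring
  rw [hch]
  have hv0 : v ≠ 0 := hv
  field_simp

lemma logcosh : Tendsto (fun v : ℝ => Real.log (Real.cosh v) / v ^ 2) (𝓝[≠] (0:ℝ)) (𝓝 (1/2)) := by
  have ht : Tendsto (fun v : ℝ => Real.cosh v - 1) (𝓝[≠] (0:ℝ)) (𝓝[≠] (0:ℝ)) := by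
    apply tendsto_nhdsWithin_of_tendsto_nhds_of_eventually_within
    · have : Tendsto (fun v : ℝ => Real.cosh v - 1) (𝓝 0) (𝓝 (Real.cosh 0 - 1)) :=
        (Real.continuous_cosh.sub continuous_const).tendsto 0
      simpa using this.mono_left nhdsWithin_le_nhds
    · filter_upwards [self_mem_nhdsWithin] with v hv
      have : 1 < Real.cosh v := Real.one_lt_cosh.mpr hv
      exact sub_ne_zero.mpr (ne_of_gt this)
  have h := (log1p_slope.comp ht).mul coshratio
  rw [one_mul] at h
  refine h.congr' ?_
  filter_upwards [ht.eventually self_mem_nhdsWithin, self_mem_nhdsWithin] with v hv hv0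
  simp only [Function.comp]
  have h1 : (1 : ℝ) + (Real.cosh v - 1) = Real.cosh v := by ring
  rw [h1]
  have hne : Real.cosh v - 1 ≠ 0 := by simpa using hv
  have hv0' : v ≠ 0 := hv0
  field_simp

/-- Rewriting `sigma0sq` as `2 log cosh u`. -/
lemma sigma0sq_eq (β : ℝ) (hβ : 1 ≤ β) {P : ℝ} (hP : 0 < P) :
    sigma0sq β P = 2 * Real.log (Real.cosh
      ((1/4) * (Real.log (β + a β * P) - Real.log (β + b β * P)))) := by
  have hβ0 : (0:ℝ) < β := lt_of_lt_of_le one_pos hβ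
  have hA : 0 < β + a β * P := by
    have := mul_nonneg (sq_nonneg (Real.sqrt β - 1)) hP.le
    unfold a; nlinarith
  have hB : 0 < β + b β * P := by
    have h1 : (0:ℝ) < Real.sqrt β + 1 := by positivity
    have := mul_nonneg (sq_nonneg (Real.sqrt β + 1)) hP.le
    unfold b; nlinarith
  have hx1 : (0:ℝ) < (β + a β * P) / (β + b β * P) := div_pos hA hB
  have hx2 : (0:ℝ) < (β + b β * P) / (β + a β * P) := div_pos hB hA
  rw [sigma0sq, Real.rpow_def_of_pos hx1, Real.rpow_def_of_pos hx2,
      Real.log_div hA.ne' hB.ne', Real.log_div hB.ne' hA.ne']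
  have e1 : (Real.log (β + a β * P) - Real.log (β + b β * P)) * (1/4)
      = (1/4) * (Real.log (β + a β * P) - Real.log (β + b β * P)) := by ring
  have e2 : (Real.log (β + b β * P) - Real.log (β + a β * P)) * (1/4)
      = -((1/4) * (Real.log (β + a β * P) - Real.log (β + b β * P))) := by ring
  rw [e1, e2, ← Real.cosh_eq]

lemma u_neg (β : ℝ) (hβ : 1 ≤ β) {P : ℝ} (hP : 0 < P) :
    (1/4) * (Real.log (β + a β * P) - Real.log (β + b β * P)) < 0 := by
  have hβ0 : (0:ℝ) < β := lt_of_lt_of_le one_pos hβ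
  have hsβ1 : 1 ≤ Real.sqrt β := by
    rw [show (1:ℝ) = Real.sqrt 1 by simp]
    exact Real.sqrt_le_sqrt hβ
  have hA : 0 < β + a β * P := by
    have := mul_nonneg (sq_nonneg (Real.sqrt β - 1)) hP.le
    unfold a; nlinarith
  have hlt : β + a β * P < β + b β * P := by
    have h1 : (0:ℝ) < b β - a β := by
      have : b β - a β = 4 * Real.sqrt β := by unfold a b; ring
      rw [this]; nlinarith
    nlinarith [mul_pos h1 hP]
  have := Real.log_lt_log hA hlt
  nlinarith

lemma sigma_pos (β : ℝ) (hβ : 1 ≤ β) {P : ℝ} (hP : 0 < P) : 0 < sigma0sq β P := by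
  rw [sigma0sq_eq β hβ hP]
  have h1 : 1 < Real.cosh ((1/4) * (Real.log (β + a β * P) - Real.log (β + b β * P))) :=
    Real.one_lt_cosh.mpr (ne_of_lt (u_neg β hβ hP))
  have := Real.log_pos h1
  linarith

lemma sigma_lim (β : ℝ) (hβ : 1 ≤ β) :
    Tendsto (fun P => sigma0sq β P / P ^ 2) (𝓝[>] (0:ℝ)) (𝓝 (1/β)) := by
  have hβ0 : (0:ℝ) < β := lt_of_lt_of_le one_pos hβ
  have hsq : Real.sqrt β ^ 2 = β := Real.sq_sqrt hβ0.le
  have hsβ1 : 1 ≤ Real.sqrt β := by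
    rw [show (1:ℝ) = Real.sqrt 1 by simp]
    exact Real.sqrt_le_sqrt hβ
  set u : ℝ → ℝ := fun P => (1/4) * (Real.log (β + a β * P) - Real.log (β + b β * P))
    with hu_def
  -- derivative of u at 0
  have hd : HasDerivAt u ((1/4) * (β⁻¹ * a β - β⁻¹ * b β)) 0 := by
    have hA : HasDerivAt (fun P : ℝ => β + a β * P) (a β) 0 := by
      simpa using ((hasDerivAt_id (0:ℝ)).const_mul (a β)).const_add β
    have hB : HasDerivAt (fun P : ℝ => β + b β * P) (b β) 0 := by
      simpa using ((hasDerivAt_id (0:ℝ)).const_mul (b β)).const_add β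
    have hlogA : HasDerivAt (fun P : ℝ => Real.log (β + a β * P)) (β⁻¹ * a β) 0 := by
      have := (Real.hasDerivAt_log (x := β + a β * 0) (by simpa using hβ0.ne')).comp 0 hA
      simpa [Function.comp_def] using this
    have hlogB : HasDerivAt (fun P : ℝ => Real.log (β + b β * P)) (β⁻¹ * b β) 0 := by
      have := (Real.hasDerivAt_log (x := β + b β * 0) (by simpa using hβ0.ne')).comp 0 hB
      simpa [Function.comp_def] using this
    exact (hlogA.sub hlogB).const_mul (1/4)
  have hu00 : u 0 = 0 := by simp [hu_def]
  have hslope : Tendsto (fun P => u P / P) (𝓝[≠] (0:ℝ))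
      (𝓝 ((1/4) * (β⁻¹ * a β - β⁻¹ * b β))) := by
    have h := hd
    rw [hasDerivAt_iff_tendsto_slope] at h
    simp only [slope_fun_def, hu00, sub_zero, vsub_eq_sub] at h
    exact h.congr (fun P => by rw [smul_eq_mul, div_eq_mul_inv, mul_comm])
  have hsub : 𝓝[>] (0:ℝ) ≤ 𝓝[≠] (0:ℝ) := nhdsWithin_mono 0 (fun x hx => ne_of_gt hx)
  have hslope' := hslope.mono_left hsub
  have hd2 : ((1/4) * (β⁻¹ * a β - β⁻¹ * b β)) ^ 2 = 1/β := by
    have h1 : a β - b β = -(4 * Real.sqrt β) := by unfold a b; ring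
    have h2 : β⁻¹ * a β - β⁻¹ * b β = β⁻¹ * (a β - b β) := by ring
    rw [h2, h1]
    field_simp
    linear_combination hsq
  have hu0' : Tendsto u (𝓝[>] (0:ℝ)) (𝓝[≠] (0:ℝ)) := by
    apply tendsto_nhdsWithin_of_tendsto_nhds_of_eventually_within
    · have h := hd.continuousAt.tendsto
      rw [hu00] at h
      exact h.mono_left nhdsWithin_le_nhds
    · filter_upwards [self_mem_nhdsWithin] with P hP
      exact ne_of_lt (u_neg β hβ hP)
  have h1 := (logcosh.comp hu0').mul (hslope'.pow 2)
  have h2 := h1.const_mul (2:ℝ)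
  have h3 : (2:ℝ) * (1/2 * ((1/4) * (β⁻¹ * a β - β⁻¹ * b β)) ^ 2) = 1/β := by
    rw [hd2]; ring
  rw [h3] at h2
  refine h2.congr' ?_
  filter_upwards [self_mem_nhdsWithin] with P hP
  have hP0 : P ≠ 0 := ne_of_gt hP
  have huP : u P ≠ 0 := ne_of_lt (u_neg β hβ hP)
  simp only [Function.comp]
  rw [sigma0sq_eq β hβ hP]
  field_simp
  ring
  simp only [hu_def]
  ring_nf

lemma C_lim (β : ℝ) (hβ : 1 ≤ β) :
    Tendsto (fun P => C₃₀ β P / P ^ 3) (𝓝[>] (0:ℝ)) (𝓝 (2 / β ^ 2)) := by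
  have hβ0 : (0:ℝ) < β := lt_of_lt_of_le one_pos hβ
  set sf : ℝ → ℝ := fun P => Real.sqrt (β^2 + 2*β*(β+1)*P + (β-1)^2*P^2) with hsf_def
  set Nf : ℝ → ℝ := fun P =>
    (β-1)^2*((β^2+1)*P^3 + 3*β*(β+1)*P^2) + 3*β^2*(β^2+1)*P + β^3*(β+1) with hNf_def
  have hQpos : ∀ P : ℝ, 0 ≤ P → 0 < β^2 + 2*β*(β+1)*P + (β-1)^2*P^2 := by
    intro P hP
    have h1 : 0 ≤ 2*β*(β+1)*P := mul_nonneg (by positivity) hP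
    nlinarith [sq_nonneg ((β-1)*P)]
  have hG : Tendsto (fun P : ℝ =>
      (8*β^5*(β+1) + 12*β^4*(β-1)^2*P - 4*β^2*(β-1)^4*P^3) /
        (2*β*(sf P)^3*(sf P*((β+1)*(sf P)^2 - 6*β^2*P) + Nf P)))
      (𝓝[>] (0:ℝ)) (𝓝 (2/β^2)) := by
    have hcs : Continuous sf := by
      rw [hsf_def]
      exact Real.continuous_sqrt.comp (by continuity)
    have hcden : Continuous (fun P : ℝ =>
        2*β*(sf P)^3*(sf P*((β+1)*(sf P)^2 - 6*β^2*P) + Nf P)) := by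
      rw [hNf_def]
      fun_prop
    have hs0 : sf 0 = β := by
      rw [hsf_def]
      norm_num
      exact Real.sqrt_sq hβ0.le
    have hden0 : 2*β*(sf 0)^3*(sf 0*((β+1)*(sf 0)^2 - 6*β^2*0) + Nf 0) ≠ 0 := by
      rw [hs0, hNf_def]
      have hx : 2*β*β^3*(β*((β+1)*β^2 - 6*β^2*(0:ℝ)) +
          ((β-1)^2*((β^2+1)*(0:ℝ)^3 + 3*β*(β+1)*(0:ℝ)^2) + 3*β^2*(β^2+1)*(0:ℝ) + β^3*(β+1)))
          = 4*β^7*(β+1) := by ring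
      rw [hx]
      positivity
    have hct : ContinuousAt (fun P : ℝ =>
        (8*β^5*(β+1) + 12*β^4*(β-1)^2*P - 4*β^2*(β-1)^4*P^3) /
          (2*β*(sf P)^3*(sf P*((β+1)*(sf P)^2 - 6*β^2*P) + Nf P))) 0 := by
      exact ContinuousAt.div (by fun_prop) hcden.continuousAt hden0
    have h := hct.tendsto.mono_left (nhdsWithin_le_nhds (s := Set.Ioi (0:ℝ)))
    have hval : (8*β^5*(β+1) + 12*β^4*(β-1)^2*(0:ℝ) - 4*β^2*(β-1)^4*(0:ℝ)^3) /
        (2*β*(sf 0)^3*(sf 0*((β+1)*(sf 0)^2 - 6*β^2*0) + Nf 0)) = 2/β^2 := by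
      rw [hs0, hNf_def]
      norm_num
      field_simp
      ring
    rw [hval] at h
    exact h
  refine hG.congr' ?_
  filter_upwards [self_mem_nhdsWithin] with P hP
  have hP0 : P ≠ 0 := ne_of_gt hP
  have hQ := hQpos P hP.le
  have hs2 : (sf P)^2 = β^2 + 2*β*(β+1)*P + (β-1)^2*P^2 := by
    rw [hsf_def]; exact Real.sq_sqrt hQ.le
  have hspos : 0 < sf P := by
    rw [hsf_def]; exact Real.sqrt_pos.mpr hQ
  have h32 : (β^2 + 2*β*(β+1)*P + (β-1)^2*P^2) ^ ((3:ℝ)/2) = (sf P)^3 := by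
    rw [show ((3:ℝ)/2) = (1/2) * 3 by norm_num, Real.rpow_mul hQ.le, ← Real.sqrt_eq_rpow,
        show ((3:ℝ)) = ((3:ℕ):ℝ) by norm_num, Real.rpow_natCast, hsf_def]
  have hMpos : 0 < (β+1)*(sf P)^2 - 6*β^2*P := by
    rw [hs2]
    nlinarith [mul_pos hP (mul_pos (by positivity : (0:ℝ) < 2*β)
        (by nlinarith : (0:ℝ) < β^2 - β + 1)),
      mul_nonneg (by positivity : (0:ℝ) ≤ β+1) (sq_nonneg ((β-1)*P))]
  have hNpos : 0 < Nf P := by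
    rw [hNf_def]
    have h1 : 0 ≤ (β^2+1)*P^3 + 3*β*(β+1)*P^2 :=
      add_nonneg (mul_nonneg (by positivity) (pow_pos hP 3).le)
        (mul_nonneg (by positivity) (pow_pos hP 2).le)
    have h2 : 0 ≤ (β-1)^2*((β^2+1)*P^3 + 3*β*(β+1)*P^2) := mul_nonneg (sq_nonneg _) h1
    have h3 : 0 < 3*β^2*(β^2+1)*P := mul_pos (by positivity) hP
    have h4 : 0 < β^3*(β+1) := by positivity
    simp only []
    linarith
  have hfac : (sf P * ((β+1)*(sf P)^2 - 6*β^2*P) - Nf P) *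
      (sf P * ((β+1)*(sf P)^2 - 6*β^2*P) + Nf P)
      = P^3 * (8*β^5*(β+1) + 12*β^4*(β-1)^2*P - 4*β^2*(β-1)^4*P^3) := by
    rw [hNf_def]
    linear_combination ((1:ℝ)*(sf P)^4 + P^2*(sf P)^2 + P^4 + 2*β*(sf P)^4 + 2*β*P*(sf P)^2
      + 4*β*P^3 - 2*β*P^4 + β^2*(sf P)^2 + β^2*(sf P)^4 - 6*β^2*P*(sf P)^2 + 6*β^2*P^2
      - 2*β^2*P^2*(sf P)^2 - 8*β^2*P^3 - β^2*P^4 + 2*β^3*(sf P)^2 + 4*β^3*P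
      - 6*β^3*P*(sf P)^2 - 8*β^3*P^2 + 4*β^3*P^3 + 4*β^3*P^4 + β^4 + β^4*(sf P)^2
      + 2*β^4*P*(sf P)^2 + 8*β^4*P^2 + β^4*P^2*(sf P)^2 + 4*β^4*P^3 - β^4*P^4 + 2*β^5
      - 8*β^5*P^2 - 8*β^5*P^3 - 2*β^5*P^4 + β^6 + 4*β^6*P + 6*β^6*P^2 + 4*β^6*P^3
      + β^6*P^4) * hs2
  have hkey : C₃₀ β P = (sf P * ((β+1)*(sf P)^2 - 6*β^2*P) - Nf P) / (2*β*(sf P)^3) := by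
    rw [C₃₀, h32, show β^2 + 2*β*(β+1)*P + (β-1)^2*P^2 = (sf P)^2 from hs2.symm, hNf_def]
    have hs0' : sf P ≠ 0 := ne_of_gt hspos
    field_simp
    ring
  have hDpos : 0 < sf P * ((β+1)*(sf P)^2 - 6*β^2*P) + Nf P :=
    add_pos (mul_pos hspos hMpos) hNpos
  have hb1 : (0:ℝ) < 2*β*(sf P)^3*(sf P*((β+1)*(sf P)^2 - 6*β^2*P) + Nf P) :=
    mul_pos (mul_pos (by positivity) (pow_pos hspos 3)) hDpos
  have hb2 : (0:ℝ) < 2*β*(sf P)^3*P^3 :=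
    mul_pos (mul_pos (by positivity) (pow_pos hspos 3)) (pow_pos hP 3)
  rw [hkey, div_div, div_eq_div_iff hb1.ne' hb2.ne']
  linear_combination (-(2*β*(sf P)^3)) * hfac

theorem stmt14 (β : ℝ) (hβ : 1 ≤ β) :
    Tendsto (fun P => P ^ 3 * (C₃₀ β P / (sigma0sq β P) ^ 3))
      (𝓝[>] (0 : ℝ)) (𝓝 (2 * β)) := by
  have hβ0 : (0:ℝ) < β := lt_of_lt_of_le one_pos hβ
  have h1 := C_lim β hβ
  have h2 := sigma_lim β hβ
  have h3 : Tendsto (fun P => P ^ 2 / sigma0sq β P) (𝓝[>] (0:ℝ)) (𝓝 β) := by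
    have h := h2.inv₀ (by positivity : (1/β : ℝ) ≠ 0)
    rw [show ((1:ℝ)/β)⁻¹ = β by field_simp] at h
    exact h.congr (fun P => inv_div _ _)
  have h4 := h1.mul (h3.pow 3)
  have h5 : (2/β^2 : ℝ) * β^3 = 2*β := by field_simp
  rw [h5] at h4
  refine h4.congr' ?_
  filter_upwards [self_mem_nhdsWithin] with P hP
  have hσ : 0 < sigma0sq β P := sigma_pos β hβ hP
  have hσ0 : sigma0sq β P ≠ 0 := ne_of_gt hσ
  have hP0 : P ≠ 0 := ne_of_gt hP
  field_simp
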